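/- arXiv:2601.19159 — 5 statements merged into one kernel-verified Lean document; each statement's English description precedes it below -/
import Mathlib

section
/- For the Young diagram μ = (n, (n−1)^{k−1}) (first row of length n, then k−1 rows of length n−1), the number of standard Young tableaux of shape μ equals k·(kn−k+1)!/(n+k−1) · ∏_{r=1}^{k} (k−r)!/(n+k−r−1)!. -/
/-- Number of cells strictly below cell `(i,j)` (0-indexed) within the first `R` rows of the
Young diagram with row lengths `μ`. -/
def legLen (R : ℕ) (μ : ℕ → ℕ) (i j : ℕ) : ℕ :=
  ((Finset.range R).filter (fun i' => i < i' ∧ j < μ i')).card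

/-- Hook length at cell `(i,j)` (0-indexed). -/
def hookLen (R : ℕ) (μ : ℕ → ℕ) (i j : ℕ) : ℕ :=
  (μ i - j) + legLen R μ i j

/-- Number of standard Young tableaux of the partition with row lengths `μ` and at most `R`
rows, via the hook length formula `N! / ∏ hooks`. -/
def dimSYT (R : ℕ) (μ : ℕ → ℕ) : ℚ :=
  ((∑ i ∈ Finset.range R, μ i).factorial : ℚ) /
    ∏ i ∈ Finset.range R, ∏ j ∈ Finset.range (μ i), (hookLen R μ i j : ℚ)

/-!
With `n = m + 1` and `k = K + 1`, the hooks in each row of `μ = (m + 1, m^K)` are consecutive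
integers: in row `0` the first `m` cells have hooks `m + K + 1, …, K + 2` (the last cell has hook
`1`), and in row `i + 1` the hooks are `m + K - 1 - i, …, K - i`. So each row contributes a ratio
of two factorials. Row `i + 1` cancels the factor `r = i + 2` of the stated product, and row `0`
cancels the factor `r = 1` together with the prefactor `k / (n + k - 1)`.
-/

open Finset Nat

lemma prod_range_cast_sub_eq_factorial_div {F : Type*} [Field F] [CharZero F] {a m : ℕ}
    (h : m ≤ a) : ∏ j ∈ range m, ((a - j : ℕ) : F) = (a ! : F) / ((a - m)! : F) := by
  rw [eq_div_iff (Nat.cast_ne_zero.2 (factorial_ne_zero _)), ← Nat.cast_prod,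
    ← Nat.descFactorial_eq_prod_range, ← Nat.cast_mul, mul_comm, Nat.factorial_mul_descFactorial h]

def nearRect (m : ℕ) (i : ℕ) : ℕ := if i = 0 then m + 1 else m

section nearRect

variable (m K : ℕ)

lemma nearRect_zero : nearRect m 0 = m + 1 := rfl

lemma nearRect_succ (i : ℕ) : nearRect m (i + 1) = m := rfl

lemma sum_nearRect : ∑ i ∈ range (K + 1), nearRect m i = (K + 1) * m + 1 := by
  simp only [sum_range_succ', nearRect_succ, nearRect_zero, sum_const, card_range, smul_eq_mul]
  ring

lemma legLen_nearRect (i j : ℕ) :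
    legLen (K + 1) (nearRect m) i j = if j < m then K - i else 0 := by
  unfold legLen
  split_ifs with hj
  · rw [show (range (K + 1)).filter (fun i' => i < i' ∧ j < nearRect m i') = Ioc i K by
      ext i'
      simp only [mem_filter, mem_range, mem_Ioc]
      unfold nearRect; split_ifs <;> omega]
    simp
  · rw [filter_eq_empty_iff.2 fun i' _ => by simp only [nearRect]; split_ifs <;> omega]
    rfl

lemma hookLen_nearRect_zero {j : ℕ} (hj : j < m) :
    hookLen (K + 1) (nearRect m) 0 j = m + K + 1 - j := by
  simp only [hookLen, legLen_nearRect, if_pos hj, nearRect_zero]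
  omega

lemma hookLen_nearRect_succ {i j : ℕ} (hi : i < K) (hj : j < m) :
    hookLen (K + 1) (nearRect m) (i + 1) j = m + K - 1 - i - j := by
  simp only [hookLen, legLen_nearRect, if_pos hj, nearRect_succ]
  omega

lemma prod_hookLen_nearRect_row_zero :
    ∏ j ∈ range (m + 1), (hookLen (K + 1) (nearRect m) 0 j : ℚ)
      = ((m + K + 1)! : ℚ) / ((K + 1)! : ℚ) := by
  have hlast : hookLen (K + 1) (nearRect m) 0 m = 1 := by
    simp [hookLen, legLen_nearRect, nearRect_zero]
  rw [prod_range_succ, hlast, Nat.cast_one, mul_one,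
    prod_congr rfl fun j hj => by rw [hookLen_nearRect_zero m K (mem_range.1 hj)],
    prod_range_cast_sub_eq_factorial_div (by omega), show m + K + 1 - m = K + 1 by omega]

lemma prod_hookLen_nearRect_row_succ {i : ℕ} (hi : i < K) :
    ∏ j ∈ range m, (hookLen (K + 1) (nearRect m) (i + 1) j : ℚ)
      = ((m + K - 1 - i)! : ℚ) / ((K - 1 - i)! : ℚ) := by
  rw [prod_congr rfl fun j hj => by rw [hookLen_nearRect_succ m K hi (mem_range.1 hj)],
    prod_range_cast_sub_eq_factorial_div (by omega), show m + K - 1 - i - m = K - 1 - i by omega]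

end nearRect

/-- for `μ = (n,(n−1)^{k−1})`, the number of standard Young tableaux of shape μ
equals `k(kn−k+1)!/(n+k−1) · ∏_{r=1}^{k}(k−r)!/(n+k−r−1)!`. -/
theorem dimSpecht_nearRectangle (n k : ℕ) (hn : 1 ≤ n) (hk : 1 ≤ k) :
    dimSYT k (fun i => if i = 0 then n else n - 1)
      = (k : ℚ) * ((k * n - k + 1).factorial : ℚ) / ((n + k - 1 : ℕ) : ℚ) *
        ∏ r ∈ Finset.Icc 1 k, ((k - r).factorial : ℚ) / ((n + k - r - 1).factorial : ℚ) := by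
  obtain ⟨m, rfl⟩ : ∃ m, n = m + 1 := ⟨n - 1, by omega⟩
  obtain ⟨K, rfl⟩ : ∃ K, k = K + 1 := ⟨k - 1, by omega⟩
  set P : ℚ := ∏ i ∈ range K, ((m + K - 1 - i)! : ℚ) / (K - 1 - i)!
  have hrows : ∏ i ∈ range (K + 1), ∏ j ∈ range (nearRect m i),
      (hookLen (K + 1) (nearRect m) i j : ℚ) = P * ((m + K + 1)! / (K + 1)!) := by
    rw [prod_range_succ']
    exact congr_arg₂ _ (prod_congr rfl fun i hi => prod_hookLen_nearRect_row_succ m K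
      (mem_range.1 hi)) (prod_hookLen_nearRect_row_zero m K)
  have hIcc : ∏ r ∈ Icc 1 (K + 1), ((K + 1 - r)! : ℚ) / (m + 1 + (K + 1) - r - 1)!
      = P⁻¹ * (K ! / (m + K)!) := by
    rw [← Ico_add_one_right_eq_Icc, prod_Ico_eq_prod_range, Nat.add_sub_cancel, prod_range_succ',
      ← prod_inv_distrib]
    refine congr_arg₂ _ (prod_congr rfl fun i _ => ?_) ?_
    · rw [inv_div, show K + 1 - (1 + (i + 1)) = K - 1 - i by omega,
        show m + 1 + (K + 1) - (1 + (i + 1)) - 1 = m + K - 1 - i by omega]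
    · rw [show m + 1 + (K + 1) - (1 + 0) - 1 = m + K by omega, show K + 1 - (1 + 0) = K by omega]
  have hP : P ≠ 0 := prod_ne_zero_iff.2 fun i _ => by positivity
  rw [show (fun i => if i = 0 then m + 1 else m + 1 - 1) = nearRect m from rfl, dimSYT, hrows,
    sum_nearRect, hIcc, show (K + 1) * (m + 1) - (K + 1) + 1 = (K + 1) * m + 1 by
      rw [Nat.mul_succ]; omega, show m + 1 + (K + 1) - 1 = m + K + 1 by omega,
    factorial_succ (m + K), factorial_succ K]
  push_cast
  field_simp
end

section
/- The ratio of the number of standard Young tableaux of shape ((n−1)^k) to the number of standard Young tableaux of shape (n,(n−1)^{k−1}) equals (n+k−1)/(k(kn−k+1)). -/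
/-! The two shapes differ only in their first row, and the hook of a cell only sees its own row
and the rows below it, so every hook outside the first row cancels in the ratio. If all rows
below the first have length `m`, the first `m` hooks of the first row are `μ₀ + K - j`
(`K` rows below), a descending factorial; the near-rectangle has one extra first-row cell with
hook `1`. What remains is `(m+K+1)↓m / (m+K)↓m = (m+K+1)/(K+1)` against the factor
`1/(Km + m + 1)` from the factorials of the sizes. -/

open Finset Nat

lemma hookLen_pos {R : ℕ} {μ : ℕ → ℕ} {i j : ℕ} (hj : j < μ i) : 0 < hookLen R μ i j := by
  unfold hookLen
  omega

lemma hookLen_congr {R : ℕ} {μ ν : ℕ → ℕ} {i : ℕ} (h : ∀ x, i ≤ x → μ x = ν x) (j : ℕ) :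
    hookLen R μ i j = hookLen R ν i j := by
  unfold hookLen legLen
  rw [h i le_rfl, filter_congr fun x _ => and_congr_right fun hx => by rw [h x hx.le]]

lemma legLen_zero_of_lt {K m j : ℕ} {μ : ℕ → ℕ} (hμ : ∀ i, 0 < i → μ i = m) (hj : j < m) :
    legLen (K + 1) μ 0 j = K := by
  have rows_below : (range (K + 1)).filter (fun i => 0 < i ∧ j < μ i) = Ioc 0 K := by
    ext i
    simp only [mem_filter, mem_range, mem_Ioc]
    constructor
    · rintro ⟨hiK, hi, -⟩
      omega
    · rintro ⟨hi, hiK⟩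
      exact ⟨by omega, hi, (hμ i hi).symm ▸ hj⟩
  rw [legLen, rows_below, Nat.card_Ioc, Nat.sub_zero]

lemma legLen_zero_of_le {R m j : ℕ} {μ : ℕ → ℕ} (hμ : ∀ i, 0 < i → μ i = m) (hj : m ≤ j) :
    legLen R μ 0 j = 0 := by
  refine card_eq_zero.2 (filter_eq_empty_iff.2 fun i _ ⟨hi, hji⟩ => ?_)
  rw [hμ i hi] at hji
  omega

lemma prod_hookLen_zero {K m : ℕ} {μ : ℕ → ℕ} (hμ : ∀ i, 0 < i → μ i = m) (hm : m ≤ μ 0) :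
    ∏ j ∈ range m, hookLen (K + 1) μ 0 j = (μ 0 + K).descFactorial m := by
  rw [Nat.descFactorial_eq_prod_range]
  refine prod_congr rfl fun j hj => ?_
  replace hj := mem_range.1 hj
  rw [hookLen, legLen_zero_of_lt hμ hj]
  omega

lemma dimSYT_div_dimSYT_of_eq_of_pos {R : ℕ} {μ ν : ℕ → ℕ} (h : ∀ i, 0 < i → μ i = ν i) :
    dimSYT (R + 1) μ / dimSYT (R + 1) ν =
      ((∑ i ∈ range (R + 1), μ i)! / (∑ i ∈ range (R + 1), ν i)! : ℚ) *
        ((∏ j ∈ range (ν 0), hookLen (R + 1) ν 0 j : ℕ) /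
          (∏ j ∈ range (μ 0), hookLen (R + 1) μ 0 j : ℕ) : ℚ) := by
  have tail : ∏ i ∈ range R, ∏ j ∈ range (μ (i + 1)), (hookLen (R + 1) μ (i + 1) j : ℚ) =
      ∏ i ∈ range R, ∏ j ∈ range (ν (i + 1)), (hookLen (R + 1) ν (i + 1) j : ℚ) := by
    refine prod_congr rfl fun i _ => ?_
    rw [h _ i.succ_pos]
    exact prod_congr rfl fun j _ => by
      rw [hookLen_congr fun x hx => h x (i.succ_pos.trans_le hx)]
  have tail_ne_zero : ∏ i ∈ range R, ∏ j ∈ range (μ (i + 1)),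
      (hookLen (R + 1) μ (i + 1) j : ℚ) ≠ 0 :=
    prod_ne_zero_iff.2 fun i _ => prod_ne_zero_iff.2 fun j hj =>
      Nat.cast_ne_zero.2 (hookLen_pos (mem_range.1 hj)).ne'
  have row_ne_zero (κ : ℕ → ℕ) : (∏ j ∈ range (κ 0), hookLen (R + 1) κ 0 j : ℕ) ≠ (0 : ℚ) :=
    Nat.cast_ne_zero.2 (prod_ne_zero_iff.2 fun j hj => (hookLen_pos (mem_range.1 hj)).ne')
  unfold dimSYT
  rw [prod_range_succ', prod_range_succ', ← tail]
  push_cast at row_ne_zero ⊢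
  field_simp [row_ne_zero μ, row_ne_zero ν, Nat.factorial_ne_zero]

/-- `f^{((n−1)^k)} / f^{(n,(n−1)^{k−1})} = (n+k−1)/(k(kn−k+1))`. -/
theorem dimSpecht_ratio (n k : ℕ) (hn : 1 ≤ n) (hk : 1 ≤ k) :
    dimSYT k (fun _ => n - 1) / dimSYT k (fun i => if i = 0 then n else n - 1)
      = ((n + k - 1 : ℕ) : ℚ) / ((k * (k * n - k + 1) : ℕ) : ℚ) := by
  obtain ⟨m, rfl⟩ : ∃ m, n = m + 1 := ⟨n - 1, by omega⟩
  obtain ⟨K, rfl⟩ : ∃ K, k = K + 1 := ⟨k - 1, by omega⟩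
  simp only [Nat.add_sub_cancel]
  set ν : ℕ → ℕ := fun i => if i = 0 then m + 1 else m
  have hν : ∀ i, 0 < i → ν i = m := fun i hi => if_neg hi.ne'
  have size_ν : ∑ i ∈ range (K + 1), ν i = (K + 1) * m + 1 := by
    rw [sum_range_succ', sum_congr rfl fun i _ => hν (i + 1) i.succ_pos]
    simp only [sum_const, card_range, smul_eq_mul, ↓reduceIte, ν]
    ring
  have hook_corner : hookLen (K + 1) ν 0 m = 1 := by
    simp [hookLen, legLen_zero_of_le hν le_rfl, ν]
  have hν0 : ν 0 = m + 1 := rfl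
  rw [dimSYT_div_dimSYT_of_eq_of_pos (ν := ν) fun i hi => (hν i hi).symm, size_ν, hν0,
    prod_range_succ, hook_corner, mul_one, prod_hookLen_zero hν (by omega), hν0,
    prod_hookLen_zero (fun _ _ => rfl) le_rfl, sum_const, card_range, smul_eq_mul,
    factorial_succ, show m + 1 + (K + 1) - 1 = m + K + 1 by omega,
    show (K + 1) * (m + 1) - (K + 1) + 1 = (K + 1) * m + 1 by rw [Nat.mul_succ]; omega]
  have hook_ratio : ((K + 1 : ℕ) : ℚ) * (m + K + 1).descFactorial m =
      (m + K + 1 : ℕ) * (m + K).descFactorial m := by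
    rw [← Nat.cast_mul, ← Nat.cast_mul, ← Nat.succ_descFactorial,
      show m + K + 1 - m = K + 1 by omega]
  have hD : ((m + K).descFactorial m : ℚ) ≠ 0 :=
    Nat.cast_ne_zero.2 (Nat.descFactorial_eq_zero_iff_lt.not.2 (by omega))
  rw [show m + 1 + K = m + K + 1 by omega]
  field_simp
  push_cast at hook_ratio ⊢
  linear_combination ((((K + 1) * m)! : ℕ) : ℚ) * ((K + 1) * m + 1) * hook_ratio
end

section
/- Let C(n,k) = d·(k(d+n−1)/(k+n−1))·∏_{r=1}^{k} (d+n−r−1)!(k−r)!/((k+n−r−1)!(d−r)!) for 1 ≤ k ≤ d. If k + k' = d with 1 ≤ k' ≤ k ≤ d, then lim_{n→∞} C(n,k)/C(n,k') = k/(d−k). -/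
/-!
Writing `q s = (n + s - 1)! / s!`, the `r`-th factor of the product in `CC d k n` is
`q (d - r) / q (k - r)`, so after reflecting `r ↦ d - r` the product telescopes to
`∏_{s<d} q s / (∏_{s<k} q s · ∏_{s<d-k} q s)`, which is symmetric under `k ↔ d - k`.
Hence for `k + k' = d` the ratio `CC d k n / CC d k' n` is the ratio of the prefactors,
`k (k' + n - 1) / (k' (k + n - 1))`, a quotient of linear functions of `n` tending to `k / k'`.
-/

/-- SDP complexity of the rectangular scheme: `C(n,k) = d · (k(d+n−1)/(k+n−1)) ·
∏_{r=1}^{k} (d+n−r−1)!(k−r)!/((k+n−r−1)!(d−r)!)`, i.e. `d · dim 𝕌^d_{(n,(n−1)^{k−1})}`. -/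
noncomputable def CC (d k n : ℕ) : ℝ :=
  (d : ℝ) * (((k * (d + n - 1) : ℕ) : ℝ) / ((k + n - 1 : ℕ) : ℝ)) *
    ∏ r ∈ Finset.Icc 1 k,
      (((d + n - r - 1).factorial : ℝ) * ((k - r).factorial : ℝ)) /
        (((k + n - r - 1).factorial : ℝ) * ((d - r).factorial : ℝ))

open Finset Filter Topology
open scoped Nat

theorem Finset.prod_range_mul_prod_Icc_sub {M : Type*} [CommMonoid M] (f : ℕ → M) {k d : ℕ}
    (h : k ≤ d) :
    (∏ s ∈ range (d - k), f s) * ∏ r ∈ Icc 1 k, f (d - r) = ∏ s ∈ range d, f s := by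
  rw [← Ico_add_one_right_eq_Icc, prod_Ico_reflect _ _ (by omega), Nat.add_sub_add_right,
    Nat.add_sub_cancel]
  exact prod_range_mul_prod_Ico f (Nat.sub_le d k)

theorem Finset.prod_Icc_sub_eq_prod_range {M : Type*} [CommMonoid M] (f : ℕ → M) (k : ℕ) :
    ∏ r ∈ Icc 1 k, f (k - r) = ∏ s ∈ range k, f s := by
  simpa using prod_range_mul_prod_Icc_sub f le_rfl (d := k)

noncomputable def factorialQuot (n s : ℕ) : ℝ := ((n + s - 1)! : ℝ) / s !

theorem factorialQuot_pos (n s : ℕ) : 0 < factorialQuot n s := by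
  unfold factorialQuot; positivity

theorem CC_eq_prod_factorialQuot {d k : ℕ} (hkd : k ≤ d) (n : ℕ) :
    CC d k n = d * (((k * (d + n - 1) : ℕ) : ℝ) / ((k + n - 1 : ℕ) : ℝ)) *
      ((∏ s ∈ range d, factorialQuot n s) /
        ((∏ s ∈ range k, factorialQuot n s) * ∏ s ∈ range (d - k), factorialQuot n s)) := by
  have factor : ∀ r ∈ Icc 1 k,
      (((d + n - r - 1)! : ℝ) * ((k - r)! : ℝ)) / (((k + n - r - 1)! : ℝ) * ((d - r)! : ℝ)) =
        factorialQuot n (d - r) / factorialQuot n (k - r) := by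
    intro r hr
    obtain ⟨-, hrk⟩ := mem_Icc.mp hr
    rw [factorialQuot, factorialQuot, show n + (d - r) - 1 = d + n - r - 1 by omega,
      show n + (k - r) - 1 = k + n - r - 1 by omega, div_div_div_eq, mul_comm ((d - r)! : ℝ)]
  rw [CC, prod_congr rfl factor, prod_div_distrib, prod_Icc_sub_eq_prod_range,
    ← prod_range_mul_prod_Icc_sub _ hkd, mul_comm (∏ s ∈ range k, _),
    mul_div_mul_left _ _ (prod_pos fun s _ => factorialQuot_pos n s).ne']

theorem CC_add_div_CC_add {k k' : ℕ} (hk : 1 ≤ k) (hk' : 1 ≤ k') {n : ℕ} (hn : 1 ≤ n) :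
    CC (k + k') k n / CC (k + k') k' n =
      ((k : ℝ) * (k' - 1) + k * n) / ((k' : ℝ) * (k - 1) + k' * n) := by
  rw [CC_eq_prod_factorialQuot (Nat.le_add_right k k'),
    CC_eq_prod_factorialQuot (Nat.le_add_left k' k), Nat.add_sub_cancel, Nat.add_sub_cancel_left]
  have hQ : ∀ m, 0 < ∏ s ∈ range m, factorialQuot n s := fun m =>
    prod_pos fun s _ => factorialQuot_pos n s
  rw [mul_comm (∏ s ∈ range k', _),
    mul_div_mul_right _ _ (div_pos (hQ _) (mul_pos (hQ k) (hQ k'))).ne', Nat.cast_mul,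
    Nat.cast_mul, Nat.cast_sub (by omega : 1 ≤ k + n), Nat.cast_sub (by omega : 1 ≤ k' + n),
    Nat.cast_sub (by omega : 1 ≤ k + k' + n)]
  have hk1 : (1 : ℝ) ≤ k := by exact_mod_cast hk
  have hk'1 : (1 : ℝ) ≤ k' := by exact_mod_cast hk'
  have hn1 : (1 : ℝ) ≤ n := by exact_mod_cast hn
  have hA : (k : ℝ) + n - 1 ≠ 0 := by linarith
  have hD : (k : ℝ) + k' + n - 1 ≠ 0 := by linarith
  have hk'0 : (k' : ℝ) ≠ 0 := by linarith
  push_cast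
  rw [mul_div_mul_left _ _ (by linarith), div_div_div_eq, div_eq_div_iff
    (mul_ne_zero hA (mul_ne_zero hk'0 hD)) (by nlinarith)]
  ring

theorem complexity_ratio_limit_general (d k k' : ℕ) (hk' : 1 ≤ k') (hkk : k' ≤ k)
    (hsum : k + k' = d) :
    Filter.Tendsto (fun n : ℕ => CC d k n / CC d k' n) Filter.atTop
      (nhds ((k : ℝ) / ((d : ℝ) - (k : ℝ)))) := by
  subst hsum
  have hk'0 : (k' : ℝ) ≠ 0 := by positivity
  rw [Nat.cast_add, add_sub_cancel_left]
  refine (tendsto_add_mul_div_add_mul_atTop_nhds ((k : ℝ) * (k' - 1)) ((k' : ℝ) * (k - 1)) _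
    hk'0).congr' ?_
  filter_upwards [eventually_ge_atTop 1] with n hn
  exact (CC_add_div_CC_add (hk'.trans hkk) hk' hn).symm

/-- if `k + k′ = d` with `1 ≤ k′ ≤ k ≤ d`, then
`lim_{n→∞} C(n,k)/C(n,k′) = k/(d−k)`. -/
theorem complexity_ratio_limit (d k k' : ℕ) (hd : 2 ≤ d) (hk' : 1 ≤ k') (hkk : k' ≤ k)
    (hkd : k ≤ d) (hsum : k + k' = d) :
    Filter.Tendsto (fun n : ℕ => CC d k n / CC d k' n) Filter.atTop
      (nhds ((k : ℝ) / ((d : ℝ) - (k : ℝ)))) :=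
  complexity_ratio_limit_general d k k' hk' hkk hsum
end

section
/- In particular, for 1 ≤ k ≤ d and n ≥ 1, dim 𝕌^d_{(n,(n−1)^{k−1})} = dim 𝕌^d_{(n^{d−k},1^{k−1})}. -/
/-- Dimension of the irreducible polynomial representation of `U(d)`/`GL_d` with highest
weight the partition with row lengths `μ` (at most `R ≤ d` rows), via the formula
`∏_{(i,j)∈μ} (d+j−i)/h_μ(i,j)` (0-indexed cells, so the content is `d + j − i`). -/
def dimGL (d R : ℕ) (μ : ℕ → ℕ) : ℚ :=
  ∏ i ∈ Finset.range R, ∏ j ∈ Finset.range (μ i),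
    ((d + j - i : ℕ) : ℚ) / (hookLen R μ i j : ℚ)

open Finset

lemma legLen_eq_of_forall_iff {R : ℕ} {μ : ℕ → ℕ} {i j : ℕ} (a b : ℕ)
    (h : ∀ i', (i' < R ∧ i < i' ∧ j < μ i') ↔ (a ≤ i' ∧ i' < b)) :
    legLen R μ i j = b - a := by
  rw [legLen, ← Nat.card_Ico a b]
  congr 1
  ext i'
  simpa using h i'

lemma prod_range_eq_ascFactorial_of_eq_sub_add {m b : ℕ} {g : ℕ → ℕ}
    (hg : ∀ j < m, g j = m - j + b) :
    ∏ j ∈ range m, g j = (b + 1).ascFactorial m := by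
  rw [Nat.ascFactorial_eq_prod_range, ← prod_range_reflect]
  refine prod_congr rfl fun j hj => ?_
  have hj := mem_range.mp hj
  rw [hg _ (by omega)]
  omega

lemma prod_range_div_eq_ascFactorial_div {m a b : ℕ} {f g : ℕ → ℕ} (hf : ∀ j < m, f j = a + j)
    (hg : ∀ j < m, g j = m - j + b) :
    ∏ j ∈ range m, (f j : ℚ) / g j = (a.ascFactorial m : ℚ) / (b + 1).ascFactorial m := by
  rw [prod_div_distrib, ← prod_range_eq_ascFactorial_of_eq_sub_add hg,
    Nat.ascFactorial_eq_prod_range]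
  push_cast
  congr 1
  exact prod_congr rfl fun j hj => by rw [hf j (mem_range.mp hj)]; push_cast; rfl

lemma cast_mul_succ_ascFactorial (a m : ℕ) :
    (a : ℚ) * (a + 1).ascFactorial m = (a + m : ℕ) * a.ascFactorial m := by
  exact_mod_cast Nat.succ_ascFactorial a m

/- With `c + 1` rows, `nearRectangle m` is the partition `(m + 1, m^c)`; with `e + c + 1` rows,
`rectComplement m c e` is `((m + 1)^e, 1^c, 0)`, the complement of `(m + 1, m^c, 0^e)` in the
`(e + c + 1) × (m + 1)` rectangle. -/
def nearRectangle (m i : ℕ) : ℕ := if i = 0 then m + 1 else m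

def rectComplement (m c e i : ℕ) : ℕ := if i < e then m + 1 else if i < e + c then 1 else 0

lemma legLen_nearRectangle (m c i j : ℕ) :
    legLen (c + 1) (nearRectangle m) i j = if j < m then c - i else 0 := by
  split_ifs with hj
  · rw [legLen_eq_of_forall_iff (i + 1) (c + 1) fun i' => by
      unfold nearRectangle; split_ifs <;> omega]
    omega
  · exact legLen_eq_of_forall_iff 0 0 fun i' => by unfold nearRectangle; split_ifs <;> omega

lemma legLen_rectComplement (m c e i j : ℕ) :
    legLen (e + c + 1) (rectComplement m c e) i j =
      if j = 0 then e + c - 1 - i else if j ≤ m then e - 1 - i else 0 := by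
  split_ifs with h0 hm
  · rw [legLen_eq_of_forall_iff (i + 1) (e + c) fun i' => by
      unfold rectComplement; split_ifs <;> omega]
    omega
  · rw [legLen_eq_of_forall_iff (i + 1) e fun i' => by
      unfold rectComplement; split_ifs <;> omega]
    omega
  · exact legLen_eq_of_forall_iff 0 0 fun i' => by unfold rectComplement; split_ifs <;> omega

lemma dimGL_nearRectangle (m c e : ℕ) :
    dimGL (e + c + 1) (c + 1) (nearRectangle m) =
      (e + c + 1).ascFactorial m * ((e + c + 1 + m : ℕ) : ℚ) / (c + 2).ascFactorial m *
        ∏ s ∈ range c, ((e + 1 + s).ascFactorial m : ℚ) / (s + 1).ascFactorial m := by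
  have hook i j : hookLen (c + 1) (nearRectangle m) i j =
      nearRectangle m i - j + if j < m then c - i else 0 := by
    rw [hookLen, legLen_nearRectangle]
  have top_row : ∏ j ∈ range (nearRectangle m 0), ((e + c + 1 + j - 0 : ℕ) : ℚ) /
      hookLen (c + 1) (nearRectangle m) 0 j =
        (e + c + 1).ascFactorial m * ((e + c + 1 + m : ℕ) : ℚ) / (c + 2).ascFactorial m := by
    rw [nearRectangle, if_pos rfl, prod_range_succ,
      prod_range_div_eq_ascFactorial_div (a := e + c + 1) (b := c + 1)
      (fun j _ => by omega)
      (fun j hj => by rw [hook, nearRectangle, if_pos rfl, if_pos hj]; omega)]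
    have corner : hookLen (c + 1) (nearRectangle m) 0 m = 1 := by
      rw [hook, nearRectangle, if_pos rfl, if_neg (lt_irrefl m)]
      omega
    rw [corner, Nat.cast_one, div_one, Nat.sub_zero]
    ring
  have lower_rows : ∏ i ∈ range c, ∏ j ∈ range (nearRectangle m (i + 1)),
      ((e + c + 1 + j - (i + 1) : ℕ) : ℚ) / hookLen (c + 1) (nearRectangle m) (i + 1) j =
        ∏ s ∈ range c, ((e + 1 + s).ascFactorial m : ℚ) / (s + 1).ascFactorial m := by
    rw [← prod_range_reflect]
    refine prod_congr rfl fun s hs => ?_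
    have hs := mem_range.mp hs
    rw [nearRectangle, if_neg (by omega),
      prod_range_div_eq_ascFactorial_div (a := e + 1 + s) (b := s) (fun j _ => by omega)
      (fun j hj => by rw [hook, nearRectangle, if_neg (by omega), if_pos hj]; omega)]
  rw [dimGL, prod_range_succ', top_row, lower_rows, mul_comm]

lemma dimGL_rectComplement (m c e : ℕ) :
    dimGL (e + c + 1) (e + c + 1) (rectComplement m c e) =
      (c + 1) * ∏ u ∈ range e, ((c + 2 + u : ℕ) : ℚ) / (c + 1 + m + u : ℕ) *
        ((c + 3 + u).ascFactorial m / (u + 1).ascFactorial m) := by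
  have hook i j : hookLen (e + c + 1) (rectComplement m c e) i j =
      rectComplement m c e i - j +
        if j = 0 then e + c - 1 - i else if j ≤ m then e - 1 - i else 0 := by
    rw [hookLen, legLen_rectComplement]
  have top_rows : ∏ r ∈ range e, ∏ j ∈ range (rectComplement m c e r),
      ((e + c + 1 + j - r : ℕ) : ℚ) / hookLen (e + c + 1) (rectComplement m c e) r j =
        ∏ u ∈ range e, ((c + 2 + u : ℕ) : ℚ) / (c + 1 + m + u : ℕ) *
          ((c + 3 + u).ascFactorial m / (u + 1).ascFactorial m) := by
    rw [← prod_range_reflect]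
    refine prod_congr rfl fun u hu => ?_
    have hu := mem_range.mp hu
    have hr : e - 1 - u < e := by omega
    rw [rectComplement, if_pos hr, prod_range_succ',
      prod_range_div_eq_ascFactorial_div (a := c + 3 + u) (b := u) (fun j _ => by omega)
        (fun j hj => by
          rw [hook, rectComplement, if_pos hr, if_neg j.succ_ne_zero,
            if_pos (show j + 1 ≤ m from hj)]
          omega),
      mul_comm]
    congr 3
    · omega
    · rw [hook, rectComplement, if_pos hr, if_pos rfl]
      omega
  have column_rows : ∏ x ∈ range c, ∏ j ∈ range (rectComplement m c e (e + x)),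
      ((e + c + 1 + j - (e + x) : ℕ) : ℚ) / hookLen (e + c + 1) (rectComplement m c e) (e + x) j =
        c + 1 := by
    have cell x (hx : x < c) : ∏ j ∈ range (rectComplement m c e (e + x)),
        ((e + c + 1 + j - (e + x) : ℕ) : ℚ) / hookLen (e + c + 1) (rectComplement m c e) (e + x) j =
          ((c - x + 1 : ℕ) : ℚ) / (c - x + 0 : ℕ) := by
      have hrow : rectComplement m c e (e + x) = 1 := by
        rw [rectComplement, if_neg (by omega), if_pos (by omega)]
      rw [hrow, prod_range_one, hook, hrow, if_pos rfl]
      congr 2 <;> omega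
    rw [prod_congr rfl fun x hx => cell x (mem_range.mp hx), prod_div_distrib, ← Nat.cast_prod,
      ← Nat.cast_prod, prod_range_eq_ascFactorial_of_eq_sub_add (fun _ _ => rfl),
      prod_range_eq_ascFactorial_of_eq_sub_add (fun _ _ => rfl)]
    have key := cast_mul_succ_ascFactorial 1 c
    rw [div_eq_iff (by positivity)]
    push_cast at key ⊢
    linear_combination key
  have last_row : rectComplement m c e (e + c) = 0 := by
    rw [rectComplement, if_neg (by omega), if_neg (by omega)]
  rw [dimGL, prod_range_succ, last_row, prod_range_zero, mul_one, prod_range_add, top_rows,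
    column_rows, mul_comm]

lemma nearRectangle_closedForm_eq_rectComplement_closedForm (m c e : ℕ) :
    (e + c + 1).ascFactorial m * ((e + c + 1 + m : ℕ) : ℚ) / (c + 2).ascFactorial m *
        ∏ s ∈ range c, ((e + 1 + s).ascFactorial m : ℚ) / (s + 1).ascFactorial m =
      (c + 1) * ∏ u ∈ range e, ((c + 2 + u : ℕ) : ℚ) / (c + 1 + m + u : ℕ) *
        ((c + 3 + u).ascFactorial m / (u + 1).ascFactorial m) := by
  induction e with
  | zero =>
    have key := cast_mul_succ_ascFactorial (c + 1) m
    rw [prod_range_zero, mul_one, prod_congr rfl fun s _ => by rw [zero_add, add_comm 1 s,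
      div_self (by positivity)], prod_const_one, mul_one, div_eq_iff (by positivity), zero_add]
    push_cast at key ⊢
    linear_combination (norm := ring_nf) -key
  | succ e ih =>
    have shift := (prod_range_succ' (fun s => ((e + 1 + s).ascFactorial m : ℚ)) c).symm.trans
      (prod_range_succ _ c)
    have key := cast_mul_succ_ascFactorial (e + c + 2) m
    rw [prod_range_succ, ← mul_assoc, ← ih, prod_div_distrib, prod_div_distrib]
    have hc : ((c + 2).ascFactorial m : ℚ) ≠ 0 := by positivity
    have he : ((e + 1).ascFactorial m : ℚ) ≠ 0 := by positivity
    have hprod : (∏ s ∈ range c, ((s + 1).ascFactorial m : ℚ)) ≠ 0 := by positivity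
    field_simp
    linear_combination (norm := ring_nf)
      ((e + c + 2).ascFactorial m * ((e + c + 2 + m : ℕ) : ℚ) * (c + 1 + m + e : ℕ)) * shift
      - ((e + c + 1).ascFactorial m * ((e + c + 1 + m : ℕ) : ℚ) *
          ∏ s ∈ range c, ((e + 1 + s).ascFactorial m : ℚ)) * key

/-- `dim 𝕌^d_{(n,(n−1)^{k−1})} = dim 𝕌^d_{(n^{d−k},1^{k−1})}` for
`1 ≤ k ≤ d`, `n ≥ 1`. -/
theorem dimGL_nearRectangle_eq_complement (d n k : ℕ) (hn : 1 ≤ n) (hk : 1 ≤ k)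
    (hkd : k ≤ d) :
    dimGL d k (fun i => if i = 0 then n else n - 1)
      = dimGL d d (fun i => if i < d - k then n else if i < d - 1 then 1 else 0) := by
  obtain ⟨m, rfl⟩ : ∃ m, n = m + 1 := ⟨n - 1, by omega⟩
  obtain ⟨c, rfl⟩ : ∃ c, k = c + 1 := ⟨k - 1, by omega⟩
  obtain ⟨e, rfl⟩ : ∃ e, d = e + c + 1 := ⟨d - (c + 1), by omega⟩
  have hleft : (fun i => if i = 0 then m + 1 else m + 1 - 1) = nearRectangle m := by
    funext i
    simp [nearRectangle]
  have hright : (fun i => if i < e + c + 1 - (c + 1) then m + 1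
      else if i < e + c + 1 - 1 then 1 else 0) = rectComplement m c e := by
    funext i
    simp [rectComplement, add_assoc]
  rw [hleft, hright, dimGL_nearRectangle, dimGL_rectComplement,
    nearRectangle_closedForm_eq_rectComplement_closedForm]
end

section
/- With ℰ as above and Π_k = (1/k!) Σ_{i,i'} ε_{i_1…i_k} ε_{i'_1…i'_k} |i_1…i_k⟩⟨i'_1…i'_k| the projector onto the fully antisymmetric subspace of (ℂ^k)^{⊗k}, one has k · ℰ†Π_kℰ = |φ_k⟩⟨φ_k|, where the operators act on ℂ^k ⊗ ℂ^k via the identification of the target of ℰ tensored with one additional copy, and |φ_k⟩ = Σ_{i=1}^k |ii⟩ is the unnormalized maximally entangled vector. -/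
/-- Levi-Civita symbol: sign of `f : Fin k → Fin k` if it is a bijection, else `0`. -/
noncomputable def eps (k : ℕ) (f : Fin k → Fin k) : ℂ :=
  if h : Function.Bijective f then ((Equiv.Perm.sign (Equiv.ofBijective f h) : ℤ) : ℂ) else 0

/-- The map `ℰ ⊗ 𝟙 : ℂ^k ⊗ ℂ^k → (ℂ^k)^{⊗(k−1)} ⊗ ℂ^k ≅ (ℂ^k)^{⊗k}`, where
`ℰ|i⟩ = Σ_a (ε_{a₂…a_k i}/√((k−1)!)) |a₂…a_k⟩`: the output index `b : Fin k → Fin k` holds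
the `k−1` antisymmetric slots in positions `< k−1` and the untouched second tensor factor in
the last position. -/
noncomputable def Ehat (k : ℕ) : Matrix (Fin k → Fin k) (Fin k × Fin k) ℂ :=
  Matrix.of fun b p =>
    (eps k (fun t : Fin k => if (t : ℕ) = k - 1 then p.1 else b t) /
        (Real.sqrt ((k - 1).factorial) : ℂ)) *
      (if ∀ t : Fin k, (t : ℕ) = k - 1 → b t = p.2 then 1 else 0)

/-- The projector `Π_k = (1/k!) Σ ε_{i₁…i_k} ε_{i'₁…i'_k} |i₁…i_k⟩⟨i'₁…i'_k|` onto the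
fully antisymmetric subspace of `(ℂ^k)^{⊗k}`. -/
noncomputable def PiMat (k : ℕ) : Matrix (Fin k → Fin k) (Fin k → Fin k) ℂ :=
  Matrix.of fun b b' => eps k b * eps k b' / (k.factorial : ℂ)

/-!
Since `Π_k = |ε⟩⟨ε| / k!` has rank one and `ℰ` has real entries, `ℰ†Π_kℰ = |w⟩⟨w| / k!` with
`w = ℰᵀ ε`. In `w_{ij} = Σ_b ε_b ℰ_{b,ij}` only permutations `b` with `b_k = j` contribute, each
with `sign b · ε(b with b_k := i) / √((k-1)!)`; this vanishes unless `i = j`, and is `1/√((k-1)!)`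
otherwise. Counting the `(k-1)!` such permutations gives `w = √((k-1)!) φ_k`, and
`k (k-1)! / k! = 1`.
-/

open Matrix Finset

lemma card_filter_perm_apply_eq {α : Type*} [Fintype α] [DecidableEq α] (i v : α) :
    #{σ : Equiv.Perm α | σ i = v} = (Fintype.card α - 1).factorial := by
  have fiber_eq (w : α) : #{σ : Equiv.Perm α | σ i = w} = #{σ : Equiv.Perm α | σ i = v} := by
    refine card_bij' (fun σ _ => σ.trans (Equiv.swap v w)) (fun σ _ => σ.trans (Equiv.swap v w))
      ?_ ?_ ?_ ?_ <;> intro σ hσ <;> simp_all [Equiv.ext_iff]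
  have hsum : ∑ w : α, #{σ : Equiv.Perm α | σ i = w} = (Fintype.card α).factorial := by
    rw [← card_eq_sum_card_fiberwise (fun σ _ => mem_univ (σ i)), card_univ, Fintype.card_perm]
  have hcard : Fintype.card α ≠ 0 := (Fintype.card_pos_iff.2 ⟨i⟩).ne'
  simp only [fiber_eq, sum_const, card_univ, smul_eq_mul] at hsum
  rw [← Nat.mul_factorial_pred hcard] at hsum
  exact Nat.eq_of_mul_eq_mul_left (Nat.pos_of_ne_zero hcard) hsum

lemma eps_perm (k : ℕ) (σ : Equiv.Perm (Fin k)) : eps k σ = (Equiv.Perm.sign σ : ℂ) := by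
  rw [eps, dif_pos σ.bijective]
  congr
  exact Equiv.ext fun _ => rfl

lemma star_eps (k : ℕ) (f : Fin k → Fin k) : star (eps k f) = eps k f := by
  unfold eps
  split <;> simp

lemma eps_update_perm (k : ℕ) (σ : Equiv.Perm (Fin k)) (i a : Fin k) :
    eps k (Function.update σ i a) = if a = σ i then (Equiv.Perm.sign σ : ℂ) else 0 := by
  split_ifs with ha
  · rw [ha, Function.update_eq_self, eps_perm]
  · have hne : σ.symm a ≠ i := fun h => ha (by rw [← h, Equiv.apply_symm_apply])
    have not_injective : ¬ Function.Injective (Function.update σ i a) := fun hinj =>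
      hne (hinj (by simp [Function.update_of_ne hne]))
    rw [eps, dif_neg (fun h => not_injective h.injective)]

lemma sum_eps_mul_eq_sum_perm (k : ℕ) (F : (Fin k → Fin k) → ℂ) :
    ∑ b, eps k b * F b = ∑ σ : Equiv.Perm (Fin k), (Equiv.Perm.sign σ : ℂ) * F σ := by
  rw [← sum_subset (subset_univ (univ.image fun σ : Equiv.Perm (Fin k) => ⇑σ)),
    sum_image fun σ _ τ _ h => Equiv.coe_fn_injective h]
  · simp only [eps_perm]
  · intro b _ hb
    have not_bijective : ¬ Function.Bijective b := fun h =>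
      hb (mem_image.2 ⟨Equiv.ofBijective b h, mem_univ _, rfl⟩)
    rw [eps, dif_neg not_bijective, zero_mul]

lemma Ehat_apply (k : ℕ) (i : Fin k) (hi : (i : ℕ) = k - 1) (b : Fin k → Fin k)
    (p : Fin k × Fin k) :
    Ehat k b p =
      if b i = p.2 then eps k (Function.update b i p.1) / (Real.sqrt (k - 1).factorial : ℂ)
      else 0 := by
  have last_iff (t : Fin k) : (t : ℕ) = k - 1 ↔ t = i := by rw [Fin.ext_iff, hi]
  have hupdate : (fun t : Fin k => if (t : ℕ) = k - 1 then p.1 else b t) =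
      Function.update b i p.1 := by
    ext t
    simp only [Function.update_apply, last_iff]
  have hcond : (∀ t : Fin k, (t : ℕ) = k - 1 → b t = p.2) ↔ b i = p.2 := by
    simp only [last_iff, forall_eq]
  simp only [Ehat, of_apply, hupdate, hcond, mul_ite, mul_one, mul_zero]

lemma conjTranspose_Ehat (k : ℕ) : (Ehat k)ᴴ = (Ehat k)ᵀ := by
  ext p b
  simp [Ehat, star_eps, apply_ite (star : ℂ → ℂ)]

lemma PiMat_eq_smul_vecMulVec (k : ℕ) :
    PiMat k = ((k.factorial : ℂ)⁻¹) • vecMulVec (eps k) (eps k) := by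
  ext b b'
  simp [PiMat, vecMulVec_apply, div_eq_inv_mul]

lemma transpose_mul_vecMulVec_mul {m n R : Type*} [Fintype m] [CommSemiring R]
    (A : Matrix m n R) (u v : m → R) :
    Aᵀ * vecMulVec u v * A = vecMulVec (u ᵥ* A) (v ᵥ* A) := by
  rw [mul_vecMulVec, mulVec_transpose, vecMulVec_mul]

lemma ofReal_sqrt_natCast_mul_self (n : ℕ) : ((√(n : ℝ) : ℝ) : ℂ) * (√(n : ℝ) : ℝ) = n := by
  rw [← Complex.ofReal_mul, Real.mul_self_sqrt n.cast_nonneg, Complex.ofReal_natCast]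

lemma eps_vecMul_Ehat (k : ℕ) :
    eps k ᵥ* Ehat k =
      fun p : Fin k × Fin k => if p.1 = p.2 then (Real.sqrt (k - 1).factorial : ℂ) else 0 := by
  ext p
  have hk : k ≠ 0 := (Fin.pos p.1).ne'
  let i : Fin k := ⟨k - 1, by omega⟩
  have hterm (σ : Equiv.Perm (Fin k)) : (Equiv.Perm.sign σ : ℂ) * Ehat k σ p =
      if σ i = p.2 ∧ p.1 = p.2 then (Real.sqrt (k - 1).factorial : ℂ)⁻¹ else 0 := by
    have sign_mul_self : (Equiv.Perm.sign σ : ℂ) * Equiv.Perm.sign σ = 1 := by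
      rw [← Int.cast_mul, ← Units.val_mul, Int.units_mul_self, Units.val_one, Int.cast_one]
    rw [Ehat_apply k i rfl, eps_update_perm]
    by_cases hσ : σ i = p.2
    · by_cases hp : p.1 = p.2
      · simp [hσ, hp, div_eq_mul_inv, ← mul_assoc, sign_mul_self]
      · simp [hσ, hp]
    · simp [hσ]
  rw [vecMul, dotProduct, sum_eps_mul_eq_sum_perm]
  simp only [hterm, ← sum_filter, sum_const, nsmul_eq_mul]
  by_cases hp : p.1 = p.2
  · have hsqrt : (Real.sqrt (k - 1).factorial : ℂ) ≠ 0 := by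
      rw [Complex.ofReal_ne_zero, Real.sqrt_ne_zero']
      positivity
    simp only [hp, and_true, if_true, card_filter_perm_apply_eq, Fintype.card_fin]
    rw [← ofReal_sqrt_natCast_mul_self, mul_assoc, mul_inv_cancel₀ hsqrt, mul_one]
  · simp [hp]

theorem E_dualization_general (k : ℕ) :
    (k : ℂ) • ((Ehat k).conjTranspose * PiMat k * Ehat k)
      = Matrix.of fun p q : Fin k × Fin k =>
          (if p.1 = p.2 then (1 : ℂ) else 0) * (if q.1 = q.2 then 1 else 0) := by
  rw [conjTranspose_Ehat, PiMat_eq_smul_vecMulVec, Matrix.mul_smul, Matrix.smul_mul,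
    transpose_mul_vecMulVec_mul, eps_vecMul_Ehat]
  ext p q
  have hk : k ≠ 0 := (Fin.pos p.1).ne'
  have hfact : (k.factorial : ℂ) = k * (k - 1).factorial := by
    exact_mod_cast (Nat.mul_factorial_pred hk).symm
  simp only [Matrix.smul_apply, vecMulVec_apply, of_apply, smul_eq_mul]
  split_ifs <;> simp only [mul_zero, zero_mul, mul_one]
  rw [ofReal_sqrt_natCast_mul_self, hfact]
  field_simp [Nat.factorial_ne_zero]

/-- `k · ℰ†Π_kℰ = |φ_k⟩⟨φ_k|` on `ℂ^k ⊗ ℂ^k`, where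
`|φ_k⟩ = Σ_{i=1}^k |ii⟩`. -/
theorem E_dualization (k : ℕ) (hk : 1 ≤ k) :
    (k : ℂ) • ((Ehat k).conjTranspose * PiMat k * Ehat k)
      = Matrix.of fun p q : Fin k × Fin k =>
          (if p.1 = p.2 then (1 : ℂ) else 0) * (if q.1 = q.2 then 1 else 0) :=
  E_dualization_general k
end
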